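/- arXiv:0708.1423 — 4 statements merged into one kernel-verified Lean document; each statement's English description precedes it below -/
import Mathlib

section
/- If m > n are positive integers and n does not divide m, then there exist polynomials a(x), b(x) with integer coefficients such that 1 = a(x)·Φ_m(x) + b(x)·Φ_n(x), where Φ_k denotes the k-th cyclotomic polynomial. -/
open Polynomial

lemma X_pow_gcd_sub_one_mem_span : ∀ m : ℕ, ∀ n : ℕ,
    (X ^ Nat.gcd m n - 1 : ℤ[X]) ∈ Ideal.span {X ^ m - 1, X ^ n - 1} := by
  intro m
  induction m using Nat.strong_induction_on with
  | _ m ih =>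
    intro n
    rcases Nat.eq_zero_or_pos m with hm | hm
    · subst hm
      simp only [Nat.gcd_zero_left]
      exact Ideal.subset_span (by simp)
    · rw [Nat.gcd_rec]
      have key : (X ^ (n % m) - 1 : ℤ[X]) ∈ Ideal.span {X ^ m - 1, X ^ n - 1} := by
        have hdvd : (X ^ m - 1 : ℤ[X]) ∣ X ^ (m * (n / m)) - 1 := by
          have := sub_dvd_pow_sub_pow (X ^ m : ℤ[X]) 1 (n / m)
          simpa [← pow_mul] using this
        obtain ⟨c, hc⟩ := hdvd
        have hn : (X ^ n - 1 : ℤ[X]) = X ^ (n % m) * (X ^ (m * (n / m)) - 1) + (X ^ (n % m) - 1) := by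
          have hpow : (X : ℤ[X]) ^ n = X ^ (n % m) * X ^ (m * (n / m)) := by
            rw [← pow_add]; congr 1; exact (Nat.mod_add_div n m).symm
          rw [hpow]; ring
        have : (X ^ (n % m) - 1 : ℤ[X])
            = (X ^ n - 1) - X ^ (n % m) * c * (X ^ m - 1) := by
          rw [hn, hc]; ring
        rw [this]
        exact Ideal.sub_mem _ (Ideal.subset_span (by simp))
          (Ideal.mul_mem_left _ _ (Ideal.subset_span (by simp)))
      have h2 : Ideal.span {(X ^ (n % m) - 1 : ℤ[X]), X ^ m - 1}
          ≤ Ideal.span {X ^ m - 1, X ^ n - 1} := by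
        rw [Ideal.span_le]
        intro p hp
        simp only [Set.mem_insert_iff, Set.mem_singleton_iff] at hp
        rcases hp with rfl | rfl
        · exact key
        · exact Ideal.subset_span (by simp)
      exact h2 (ih (n % m) (Nat.mod_lt _ hm) m)

lemma quotient_mem_aux {d k : ℕ} (hd : 0 < d) (hdk : d ∣ k) (hk : d < k)
    (I : Ideal ℤ[X]) (hXd : (X ^ d - 1 : ℤ[X]) ∈ I)
    (hcyc : cyclotomic k ℤ ∈ I) : (C (k / d : ℕ) : ℤ[X]) ∈ I := by
  set q := k / d with hq
  have hkdq : k = d * q := (Nat.div_mul_cancel hdk).symm.trans (mul_comm _ _)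
  set S : ℤ[X] := ∑ i ∈ Finset.range q, (X ^ d) ^ i with hS
  have hmul : (X ^ d - 1 : ℤ[X]) * S = X ^ k - 1 := by
    rw [hS, mul_comm, _root_.geom_sum_mul, ← pow_mul, ← hkdq]
  -- cyclotomic k ∣ S
  have hdvd : cyclotomic k ℤ ∣ S := by
    have h1 : (X ^ d - 1 : ℤ[X]) * cyclotomic k ℤ ∣ X ^ k - 1 :=
      X_pow_sub_one_mul_cyclotomic_dvd_X_pow_sub_one_of_dvd ℤ
        (Nat.mem_properDivisors.mpr ⟨hdk, hk⟩)
    obtain ⟨c, hc⟩ := h1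
    rw [← hmul] at hc
    have hne : (X ^ d - 1 : ℤ[X]) ≠ 0 := by
      have := X_pow_sub_C_ne_zero hd (1 : ℤ)
      rwa [map_one] at this
    exact ⟨c, mul_left_cancel₀ hne (by linear_combination hc)⟩
  have hSI : S ∈ I := dvd_iff_exists_eq_mul_left.mp hdvd |>.elim
    (fun c hc => hc ▸ Ideal.mul_mem_left _ _ hcyc)
  -- X^d - 1 ∣ S - C q
  have hdvd2 : (X ^ d - 1 : ℤ[X]) ∣ S - C (q : ℤ) := by
    have : S - C (q : ℤ) = ∑ i ∈ Finset.range q, ((X ^ d) ^ i - 1) := by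
      rw [hS, Finset.sum_sub_distrib]
      simp
    rw [this]
    exact Finset.dvd_sum fun i _ => by simpa using sub_dvd_pow_sub_pow (X ^ d : ℤ[X]) 1 i
  obtain ⟨c, hc⟩ := hdvd2
  have : (C (q : ℤ) : ℤ[X]) = S - (X ^ d - 1) * c := by rw [← hc]; ring
  rw [this]
  exact Ideal.sub_mem _ hSI (Ideal.mul_mem_right _ _ hXd)

theorem cyclotomic_not_dvd_coprime (m n : ℕ) (hn : 0 < n) (hmn : n < m)
    (hndvd : ¬ n ∣ m) :
    ∃ a b : ℤ[X], a * cyclotomic m ℤ + b * cyclotomic n ℤ = 1 := by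
  set I := Ideal.span {cyclotomic m ℤ, cyclotomic n ℤ} with hI
  have hm : 0 < m := hn.trans hmn
  set d := Nat.gcd m n with hd
  have hdpos : 0 < d := Nat.gcd_pos_of_pos_left n hm
  have hdn : d ∣ n := Nat.gcd_dvd_right m n
  have hdm : d ∣ m := Nat.gcd_dvd_left m n
  have hdltn : d < n := lt_of_le_of_ne (Nat.le_of_dvd hn hdn)
    (fun h => hndvd (h ▸ hdm))
  have hdltm : d < m := hdltn.trans hmn
  have hmemM : cyclotomic m ℤ ∈ I := Ideal.subset_span (by simp)
  have hmemN : cyclotomic n ℤ ∈ I := Ideal.subset_span (by simp)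
  have hXm : (X ^ m - 1 : ℤ[X]) ∈ I :=
    (cyclotomic.dvd_X_pow_sub_one m ℤ).elim fun c hc => hc ▸ Ideal.mul_mem_right _ _ hmemM
  have hXn : (X ^ n - 1 : ℤ[X]) ∈ I :=
    (cyclotomic.dvd_X_pow_sub_one n ℤ).elim fun c hc => hc ▸ Ideal.mul_mem_right _ _ hmemN
  have hXd : (X ^ d - 1 : ℤ[X]) ∈ I := by
    have hle : Ideal.span {(X ^ m - 1 : ℤ[X]), X ^ n - 1} ≤ I := by
      rw [Ideal.span_le]
      intro p hp
      simp only [Set.mem_insert_iff, Set.mem_singleton_iff] at hp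
      rcases hp with rfl | rfl
      · exact hXm
      · exact hXn
    exact hle (X_pow_gcd_sub_one_mem_span m n)
  have hCm : (C (m / d : ℕ) : ℤ[X]) ∈ I := quotient_mem_aux hdpos hdm hdltm I hXd hmemM
  have hCn : (C (n / d : ℕ) : ℤ[X]) ∈ I := quotient_mem_aux hdpos hdn hdltn I hXd hmemN
  have hcop : Nat.Coprime (m / d) (n / d) := Nat.coprime_div_gcd_div_gcd hdpos
  have hicop : IsCoprime ((m / d : ℕ) : ℤ) ((n / d : ℕ) : ℤ) :=
    Nat.isCoprime_iff_coprime.mpr hcop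
  obtain ⟨u, v, huv⟩ := hicop
  have h1 : (1 : ℤ[X]) ∈ I := by
    have : (1 : ℤ[X]) = C u * C ((m / d : ℕ) : ℤ) + C v * C ((n / d : ℕ) : ℤ) := by
      rw [← C_mul, ← C_mul, ← C_add, huv, C_1]
    rw [this]
    exact Ideal.add_mem _ (Ideal.mul_mem_left _ _ hCm) (Ideal.mul_mem_left _ _ hCn)
  rw [hI, Ideal.mem_span_pair] at h1
  obtain ⟨a, b, hab⟩ := h1
  exact ⟨a, b, hab⟩
end

section
/- If n divides m and m/n is not a prime power, then there exist integer polynomials a(x), b(x) such that 1 = a(x)·Φ_m(x) + b(x)·Φ_n(x). -/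
open Polynomial

/-!
Write `m / n = u * v` with coprime `u, v > 1`, which is possible as `m / n` is not a prime power.
For `n ∣ d` and `s > 1`, the polynomial `1 + X^d + ⋯ + X^(d(s-1)) = (X^(ds) - 1) / (X^d - 1)` is
divisible by `Φ_(ds)`, and it is congruent to `s` modulo `Φ_n` because `Φ_n ∣ X^n - 1 ∣ X^d - 1`.
Hence the ideal `(Φ_(ds), Φ_n)` contains `s`. Taking `d = n v, s = u` and `d = n u, s = v`, the
ideal `(Φ_m, Φ_n)` contains the coprime integers `u` and `v`, hence `1`.
-/

theorem Nat.exists_coprime_mul_eq_of_not_isPrimePow {k : ℕ} (hk : 1 < k) (h : ¬IsPrimePow k) :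
    ∃ u v, 1 < u ∧ 1 < v ∧ u.Coprime v ∧ u * v = k := by
  have hk0 : k ≠ 0 := by omega
  have hp : k.minFac.Prime := Nat.minFac_prime hk.ne'
  have hpos : 0 < k.factorization k.minFac := hp.factorization_pos_of_dvd hk0 k.minFac_dvd
  have hprod := Nat.ordProj_mul_ordCompl_eq_self k k.minFac
  refine ⟨_, _, Nat.one_lt_pow hpos.ne' hp.one_lt, ?_, (Nat.coprime_ordCompl hp hk0).pow_left _,
    hprod⟩
  by_contra hv
  obtain hv1 : k / k.minFac ^ k.factorization k.minFac = 1 := by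
    have := Nat.ordCompl_pos k.minFac hk0; omega
  rw [hv1, mul_one] at hprod
  exact h ⟨_, _, hp.prime, hpos, hprod⟩

theorem sub_one_dvd_geom_sum_sub_card {R : Type*} [Ring R] (x : R) (s : ℕ) :
    x - 1 ∣ ∑ i ∈ Finset.range s, x ^ i - (s : R) := by
  have hsum : ∑ i ∈ Finset.range s, x ^ i - (s : R) = ∑ i ∈ Finset.range s, (x ^ i - 1) := by
    simp [Finset.sum_sub_distrib]
  exact hsum ▸ Finset.dvd_sum fun i _ => sub_one_dvd_pow_sub_one x i

namespace Polynomial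

variable (R : Type*) [CommRing R] {n d s : ℕ}

theorem cyclotomic_mul_dvd_geom_sum_X_pow (hs : 1 < s) :
    cyclotomic (d * s) R ∣ ∑ i ∈ Finset.range s, (X ^ d) ^ i := by
  rcases Nat.eq_zero_or_pos d with rfl | hd
  · simp
  have hgeom : (X ^ d - 1 : R[X]) * ∑ i ∈ Finset.range s, (X ^ d) ^ i = X ^ (d * s) - 1 := by
    rw [mul_geom_sum, ← pow_mul]
  have hprod := X_pow_sub_one_mul_prod_cyclotomic_eq_X_pow_sub_one_of_dvd R (dvd_mul_right d s)
    (by positivity)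
  have hreg : IsLeftRegular (X ^ d - 1 : R[X]) := by
    simpa using (monic_X_pow_sub_C (1 : R) hd.ne').isRegular.left
  rw [hreg (hgeom.trans hprod.symm)]
  refine Finset.dvd_prod_of_mem _
    (Finset.mem_sdiff.mpr ⟨Nat.mem_divisors_self _ (by positivity), ?_⟩)
  exact fun hds => (lt_mul_of_one_lt_right hd hs).not_ge
    (Nat.le_of_dvd hd (Nat.dvd_of_mem_divisors hds))

theorem cyclotomic_dvd_geom_sum_X_pow_sub_card (hnd : n ∣ d) (s : ℕ) :
    cyclotomic n R ∣ ∑ i ∈ Finset.range s, (X ^ d) ^ i - (s : R[X]) :=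
  (cyclotomic.dvd_X_pow_sub_one n R).trans <|
    (dvd_pow_sub_one_of_dvd hnd).trans (sub_one_dvd_geom_sum_sub_card _ s)

theorem natCast_mem_span_cyclotomic_mul (hnd : n ∣ d) (hs : 1 < s) :
    (s : R[X]) ∈ Ideal.span {cyclotomic (d * s) R, cyclotomic n R} := by
  set I := Ideal.span {cyclotomic (d * s) R, cyclotomic n R}
  set g := ∑ i ∈ Finset.range s, (X ^ d : R[X]) ^ i
  have hg : g ∈ I :=
    I.mem_of_dvd (cyclotomic_mul_dvd_geom_sum_X_pow R hs) (Ideal.subset_span (by simp))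
  have hgs : g - s ∈ I :=
    I.mem_of_dvd (cyclotomic_dvd_geom_sum_X_pow_sub_card R hnd s) (Ideal.subset_span (by simp))
  simpa using I.sub_mem hg hgs

theorem isCoprime_cyclotomic_of_not_isPrimePow {m : ℕ} (hdvd : n ∣ m) (hlt : n < m)
    (hnpp : ¬IsPrimePow (m / n)) : IsCoprime (cyclotomic m R) (cyclotomic n R) := by
  obtain ⟨k, rfl⟩ := hdvd
  have hn : 0 < n := Nat.pos_of_ne_zero (by rintro rfl; simp at hlt)
  have hk : 1 < k := Nat.lt_of_mul_lt_mul_left (a := n) (by simpa using hlt)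
  rw [Nat.mul_div_cancel_left k hn] at hnpp
  obtain ⟨u, v, hu, hv, huv, rfl⟩ := Nat.exists_coprime_mul_eq_of_not_isPrimePow hk hnpp
  have hu_mem := natCast_mem_span_cyclotomic_mul R (dvd_mul_right n v) hu
  have hv_mem := natCast_mem_span_cyclotomic_mul R (dvd_mul_right n u) hv
  rw [mul_right_comm] at hu_mem
  rw [← mul_assoc]
  obtain ⟨a, b, hab⟩ := huv.cast (R := R[X])
  exact Ideal.mem_span_pair.mp (hab ▸ Ideal.add_mem _ (Ideal.mul_mem_left _ a hu_mem)
    (Ideal.mul_mem_left _ b hv_mem))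

end Polynomial

theorem cyclotomic_dvd_not_prime_pow_general (m n : ℕ) (hdvd : n ∣ m)
    (hlt : n < m) (hnpp : ¬ IsPrimePow (m / n)) :
    ∃ a b : ℤ[X], a * cyclotomic m ℤ + b * cyclotomic n ℤ = 1 :=
  isCoprime_cyclotomic_of_not_isPrimePow ℤ hdvd hlt hnpp

theorem cyclotomic_dvd_not_prime_pow (m n : ℕ) (hn : 0 < n) (hdvd : n ∣ m)
    (hlt : n < m) (hnpp : ¬ IsPrimePow (m / n)) :
    ∃ a b : ℤ[X], a * cyclotomic m ℤ + b * cyclotomic n ℤ = 1 :=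
  cyclotomic_dvd_not_prime_pow_general m n hdvd hlt hnpp
end

section
/- If n divides m and m/n = p^t for a prime p and t ≥ 1, then there exist integer polynomials a(x), b(x) such that p = a(x)·Φ_m(x) + b(x)·Φ_n(x). -/
open Polynomial

theorem cyclotomic_dvd_prime_pow (m n p t : ℕ) (hn : 0 < n) (hdvd : n ∣ m)
    (hp : p.Prime) (ht : 1 ≤ t) (hq : m / n = p ^ t) :
    ∃ a b : ℤ[X], a * cyclotomic m ℤ + b * cyclotomic n ℤ = C (p : ℤ) := by
  set q := n * p ^ (t - 1) with hqdef
  have hq0 : 0 < q := Nat.mul_pos hn (pow_pos hp.pos _)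
  have hm : m = q * p := by
    have h1 : m = p ^ t * n := by
      rw [← hq, Nat.div_mul_cancel hdvd]
    rw [h1, hqdef]
    rw [mul_assoc, ← pow_succ, Nat.sub_add_cancel ht]
    ring
  have hqm : q ∈ m.properDivisors := by
    rw [Nat.mem_properDivisors]
    constructor
    · exact ⟨p, hm⟩
    · rw [hm]
      exact lt_mul_of_one_lt_right hq0 hp.one_lt
  -- Ψ = geometric sum
  set Ψ : ℤ[X] := ∑ i ∈ Finset.range p, (X ^ q) ^ i with hΨdef
  have hgeom : Ψ * (X ^ q - 1) = X ^ m - 1 := by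
    rw [hΨdef, geom_sum_mul, ← pow_mul, hm]
  -- Φ_m divides Ψ
  have hdvd1 : (X ^ q - 1) * cyclotomic m ℤ ∣ X ^ m - 1 :=
    X_pow_sub_one_mul_cyclotomic_dvd_X_pow_sub_one_of_dvd ℤ hqm
  obtain ⟨c, hc⟩ := hdvd1
  have hXq : (X ^ q - 1 : ℤ[X]) ≠ 0 := by
    have := monic_X_pow_sub_C (1 : ℤ) hq0.ne'
    simpa using this.ne_zero
  have hΨc : Ψ = cyclotomic m ℤ * c := by
    apply mul_right_cancel₀ hXq
    rw [hgeom, hc]; ring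
  -- Φ_n divides X^q - 1
  have hdvd2 : cyclotomic n ℤ ∣ X ^ q - 1 := by
    refine (cyclotomic.dvd_X_pow_sub_one n ℤ).trans ?_
    have : (X ^ n - 1 : ℤ[X]) ∣ (X ^ n) ^ (p ^ (t - 1)) - 1 ^ (p ^ (t - 1)) :=
      sub_dvd_pow_sub_pow _ _ _
    simpa [← pow_mul, hqdef] using this
  -- X^q - 1 divides Ψ - C p
  have hdvd3 : (X ^ q - 1 : ℤ[X]) ∣ Ψ - C (p : ℤ) := by
    have hC : (C (p : ℤ) : ℤ[X]) = ∑ _i ∈ Finset.range p, 1 := by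
      simp [Polynomial.C_eq_natCast]
    rw [hΨdef, hC, ← Finset.sum_sub_distrib]
    refine Finset.dvd_sum fun i _ => ?_
    simpa using sub_dvd_pow_sub_pow (X ^ q : ℤ[X]) 1 i
  obtain ⟨d, hd⟩ := hdvd2.trans hdvd3
  refine ⟨c, -d, ?_⟩
  have : Ψ - C (p : ℤ) = cyclotomic n ℤ * d := hd
  rw [hΨc] at this
  linear_combination this
end

section
/- If n divides m and m/n = p^t for a prime p and t ≥ 1, then no integer k with 0 < k < p can be written as k = a(x)·Φ_m(x) + b(x)·Φ_n(x) with a, b ∈ ℤ[x]; i.e., p is the smallest positive integer in the ideal of ℤ[x] generated by Φ_m and Φ_n. -/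
open Polynomial

/-
Modulo `p` one has `Φ_{n p^t} = Φ_n ^ e` with `e ≥ 1`, so reducing `a Φ_m + b Φ_n = k` modulo `p`
makes `Φ_n` divide the constant `k` in `𝔽_p[X]`. Since `Φ_n` has positive degree `φ(n)`, this
forces `k ≡ 0 (mod p)`, which is impossible for `0 < k < p`.
-/

theorem cyclotomic_dvd_cyclotomic_mul_prime_pow (R : Type*) [Ring R] (p : ℕ) [Fact p.Prime]
    [CharP R p] (n : ℕ) : ∀ t : ℕ, cyclotomic n R ∣ cyclotomic (n * p ^ t) R
  | 0 => by rw [pow_zero, mul_one]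
  | t + 1 => by
    have hp := (Fact.out : p.Prime)
    rw [pow_succ, ← mul_assoc]
    by_cases hdvd : p ∣ n * p ^ t
    · rw [cyclotomic_mul_prime_dvd_eq_pow R hdvd]
      exact (cyclotomic_dvd_cyclotomic_mul_prime_pow R p n t).trans (dvd_pow_self _ hp.ne_zero)
    · have ht : t = 0 := by
        by_contra ht
        exact hdvd (dvd_mul_of_dvd_right (dvd_pow_self p ht) n)
      subst ht
      rw [pow_zero, mul_one] at hdvd ⊢
      rw [cyclotomic_mul_prime_eq_pow_of_not_dvd R hdvd]
      exact dvd_pow_self _ (Nat.sub_ne_zero_of_lt hp.one_lt)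

theorem not_isUnit_cyclotomic (K : Type*) [Field K] {n : ℕ} (hn : 0 < n) :
    ¬ IsUnit (cyclotomic n K) :=
  not_isUnit_of_degree_pos _ (degree_cyclotomic_pos n K hn)

theorem prime_dvd_of_linear_combination_cyclotomic_mul_prime_pow_eq_C {n p : ℕ} (hn : 0 < n)
    (hp : p.Prime) (t : ℕ) {a b : ℤ[X]} {k : ℤ}
    (hab : a * cyclotomic (n * p ^ t) ℤ + b * cyclotomic n ℤ = C k) : (p : ℤ) ∣ k := by
  have : Fact p.Prime := ⟨hp⟩
  have hmod := congrArg (map (Int.castRingHom (ZMod p))) hab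
  simp only [Polynomial.map_add, Polynomial.map_mul, map_cyclotomic, Polynomial.map_C,
    Int.coe_castRingHom] at hmod
  have hdvd : cyclotomic n (ZMod p) ∣ C (k : ZMod p) := hmod ▸ dvd_add
    ((cyclotomic_dvd_cyclotomic_mul_prime_pow (ZMod p) p n t).mul_left _) (dvd_mul_left _ _)
  rw [← ZMod.intCast_zmod_eq_zero_iff_dvd]
  by_contra hk
  exact not_isUnit_cyclotomic (ZMod p) hn (isUnit_of_dvd_unit hdvd (isUnit_C.mpr (Ne.isUnit hk)))

theorem cyclotomic_prime_pow_minimal_general (m n p t : ℕ) (hn : 0 < n) (hdvd : n ∣ m)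
    (hp : p.Prime) (hq : m / n = p ^ t) :
    ∀ k : ℕ, 0 < k → k < p →
      ¬ ∃ a b : ℤ[X], a * cyclotomic m ℤ + b * cyclotomic n ℤ = C (k : ℤ) := by
  rintro k hk hkp ⟨a, b, hab⟩
  rw [← Nat.mul_div_cancel' hdvd, hq] at hab
  have hpk : p ∣ k := Int.natCast_dvd_natCast.mp
    (prime_dvd_of_linear_combination_cyclotomic_mul_prime_pow_eq_C hn hp t hab)
  exact absurd (Nat.le_of_dvd hk hpk) (not_le.mpr hkp)

theorem cyclotomic_prime_pow_minimal (m n p t : ℕ) (hn : 0 < n) (hdvd : n ∣ m)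
    (hp : p.Prime) (ht : 1 ≤ t) (hq : m / n = p ^ t) :
    ∀ k : ℕ, 0 < k → k < p →
      ¬ ∃ a b : ℤ[X], a * cyclotomic m ℤ + b * cyclotomic n ℤ = C (k : ℤ) :=
  cyclotomic_prime_pow_minimal_general m n p t hn hdvd hp hq
end
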